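/- arXiv:2011.10103 — 7 statements merged into one kernel-verified Lean document; each statement's English description precedes it below -/
import Mathlib

section
/- Suppose α₀ > α₁ ≥ 1, β₀ > β₁ ≥ 1 are integers with α₁β₀ − β₁α₀ = σ where σ = 1 or σ = −1. Then for every integer j with 0 ≤ j < β₁, the fractional part {α₀ j / β₀} equals {α₁ j / β₁} − σ j / (β₁ β₀). -/
/-!
Clearing denominators in `α₁β₀ − β₁α₀ = σ` gives the exact identity
`α₀j/β₀ = α₁j/β₁ − σj/(β₁β₀)`. Since `α₁` and `β₁` are coprime and `0 < j < β₁`, the fractional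
part of `α₁j/β₁` is a multiple of `1/β₁` lying in `[1/β₁, 1 − 1/β₁]`, while the correction
`σj/(β₁β₀)` has absolute value `j/(β₁β₀) < 1/β₁`; so subtracting it does not cross an integer.
-/

theorem Int.fract_sub_eq_of_abs_lt {α : Type*} [Field α] [LinearOrder α] [IsStrictOrderedRing α]
    [FloorRing α] {a δ ε : α} (ha : Int.fract a ∈ Set.Icc ε (1 - ε)) (hδ : |δ| < ε) :
    Int.fract (a - δ) = Int.fract a - δ := by
  obtain ⟨hεa, haε⟩ := ha
  obtain ⟨hδ₁, hδ₂⟩ := abs_lt.mp hδ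
  rw [Int.fract_eq_iff]
  refine ⟨by linarith, by linarith, ⌊a⌋, ?_⟩
  rw [Int.fract]
  ring

theorem Int.fract_natCast_div_mem_Icc {n b : ℕ} (h : ¬ b ∣ n) :
    Int.fract ((n : ℚ) / b) ∈ Set.Icc (1 / (b : ℚ)) (1 - 1 / b) := by
  rw [Int.fract_div_natCast_eq_div_natCast_mod]
  rcases Nat.eq_zero_or_pos b with rfl | hb
  · simp
  have hr₀ : 1 ≤ n % b := Nat.pos_of_ne_zero fun h0 => h (Nat.dvd_of_mod_eq_zero h0)
  have hr₁ : n % b + 1 ≤ b := Nat.mod_lt n hb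
  have hbQ : (0 : ℚ) < b := by exact_mod_cast hb
  constructor
  · gcongr
    exact_mod_cast hr₀
  · rw [le_sub_iff_add_le, ← add_div, div_le_one hbQ]
    exact_mod_cast hr₁

theorem Nat.coprime_of_mul_sub_mul_eq_unit {a b c d : ℕ} {σ : ℤ} (hσ : σ = 1 ∨ σ = -1)
    (h : (a : ℤ) * d - (b : ℤ) * c = σ) : Nat.Coprime a b := by
  have hσσ : σ * σ = 1 := by rcases hσ with rfl | rfl <;> rfl
  exact Nat.isCoprime_iff_coprime.mp ⟨σ * d, -(σ * c), by linear_combination σ * h + hσσ⟩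

theorem Nat.Coprime.not_dvd_mul_of_lt {a b j : ℕ} (hab : Nat.Coprime a b) (hj₀ : 0 < j)
    (hjb : j < b) :
    ¬ b ∣ a * j := fun hdvd =>
  absurd (Nat.le_of_dvd hj₀ (hab.symm.dvd_of_dvd_mul_left hdvd)) (by omega)

theorem stmt_5_general (α₀ α₁ β₀ β₁ : ℕ)
    (hβ : β₁ < β₀) (σ : ℤ) (hσ : σ = 1 ∨ σ = -1)
    (h : (α₁ : ℤ) * β₀ - (β₁ : ℤ) * α₀ = σ)
    (j : ℕ) (hj : j < β₁) :
    Int.fract ((α₀ * j : ℚ) / β₀) =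
      Int.fract ((α₁ * j : ℚ) / β₁) - (σ : ℚ) * j / (β₁ * β₀) := by
  rcases Nat.eq_zero_or_pos j with rfl | hj₀
  · simp
  have hβ₁ : (0 : ℚ) < β₁ := by exact_mod_cast hj₀.trans hj
  have hβ₀ : (0 : ℚ) < β₀ := by exact_mod_cast hj₀.trans (hj.trans hβ)
  have hQ : (α₁ : ℚ) * β₀ - β₁ * α₀ = σ := by exact_mod_cast h
  have hsplit : (α₀ * j : ℚ) / β₀ = (α₁ * j : ℚ) / β₁ - (σ : ℚ) * j / (β₁ * β₀) := by
    rw [eq_sub_iff_add_eq, div_add_div _ _ hβ₀.ne' (by positivity),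
      div_eq_div_iff (by positivity) hβ₁.ne']
    linear_combination (-(j : ℚ) * β₁ * β₀) * hQ
  have hfract : Int.fract ((α₁ * j : ℚ) / β₁) ∈ Set.Icc (1 / (β₁ : ℚ)) (1 - 1 / β₁) := by
    have := Int.fract_natCast_div_mem_Icc
      ((Nat.coprime_of_mul_sub_mul_eq_unit hσ h).not_dvd_mul_of_lt hj₀ hj)
    exact_mod_cast this
  have hσabs : |(σ : ℚ)| = 1 := by rcases hσ with rfl | rfl <;> simp
  have hcorr : |(σ : ℚ) * j / (β₁ * β₀)| < 1 / β₁ :=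
    calc |(σ : ℚ) * j / (β₁ * β₀)| = j / (β₁ * β₀) := by
          rw [abs_div, abs_mul, hσabs, one_mul, abs_of_nonneg (by positivity),
            abs_of_pos (by positivity)]
      _ < β₀ / (β₁ * β₀) := by gcongr; exact_mod_cast hj.trans hβ
      _ = 1 / β₁ := by field_simp
  rw [hsplit, Int.fract_sub_eq_of_abs_lt hfract hcorr]

theorem stmt_5 (α₀ α₁ β₀ β₁ : ℕ) (hα₁ : 1 ≤ α₁) (hβ₁ : 1 ≤ β₁)
    (hα : α₁ < α₀) (hβ : β₁ < β₀) (σ : ℤ) (hσ : σ = 1 ∨ σ = -1)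
    (h : (α₁ : ℤ) * β₀ - (β₁ : ℤ) * α₀ = σ)
    (j : ℕ) (hj : j < β₁) :
    Int.fract ((α₀ * j : ℚ) / β₀) =
      Int.fract ((α₁ * j : ℚ) / β₁) - (σ : ℚ) * j / (β₁ * β₀) :=
  stmt_5_general α₀ α₁ β₀ β₁ hβ σ hσ h j hj
end

section
/- Suppose α₀ > α₁ ≥ 1, β₀ > β₁ ≥ 1 are integers with α₁β₀ − β₁α₀ = σ where σ = ±1. Then for any integer u with 0 ≤ u < β₁, the sum over j from 0 to u of {α₀ j / β₀} equals (the sum over j from 0 to u of {α₁ j / β₁}) minus σ·(u+1)u/(2β₀β₁). -/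
/-!
Since `α₁β₀ - β₁α₀ = σ`, we have `α₀ j / β₀ = α₁ j / β₁ - σ j / (β₀ β₁)`. For `0 ≤ j < β₁` the
shift `σ j / (β₀ β₁)` is smaller than `1 / β₁`, while `α₁` is coprime to `β₁`, so `α₁ j / β₁` lies
at distance at least `1 / β₁` from the next integer, and (for `0 < j`) from the previous one as
well. Hence the shift never crosses an integer, the fractional parts differ by exactly
`σ j / (β₀ β₁)`, and summing over `j` gives the correction term by Gauss's formula.
-/

open Finset Int

theorem sum_range_succ_natCast_mul_two {k : Type*} [CommSemiring k] (u : ℕ) :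
    (∑ j ∈ Finset.range (u + 1), (j : k)) * 2 = (u + 1) * u := by
  induction u with
  | zero => simp
  | succ u ih => rw [sum_range_succ, add_mul, ih]; push_cast; ring

theorem coprime_of_mul_sub_mul_eq {a b c d : ℕ} {σ : ℤ} (hσ : σ = 1 ∨ σ = -1)
    (h : (a : ℤ) * b - (c : ℤ) * d = σ) : a.Coprime c := by
  refine Nat.isCoprime_iff_coprime.1 ⟨σ * b, -σ * d, ?_⟩
  have hσsq : σ * σ = 1 := by rcases hσ with rfl | rfl <;> rfl
  linear_combination σ * h + hσsq

section FloorRing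

variable {k : Type*} [Field k] [LinearOrder k] [IsStrictOrderedRing k] [FloorRing k]

theorem fract_sub_eq_of_le_fract {x ε : k} (h₀ : ε ≤ fract x) (h₁ : fract x - ε < 1) :
    fract (x - ε) = fract x - ε :=
  fract_eq_iff.2 ⟨sub_nonneg.2 h₀, h₁, ⌊x⌋, by rw [fract]; ring⟩

theorem fract_natCast_div_le_one_sub (m : ℕ) {n : ℕ} (hn : 0 < n) :
    fract ((m : k) / n) ≤ 1 - 1 / n := by
  have hn' : (0 : k) < n := by exact_mod_cast hn
  rw [fract_div_natCast_eq_div_natCast_mod, le_sub_iff_add_le, ← add_div, div_le_one hn']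
  exact_mod_cast Nat.mod_lt m hn

theorem one_div_le_fract_natCast_div {m n : ℕ} (h : ¬n ∣ m) :
    1 / (n : k) ≤ fract ((m : k) / n) := by
  rw [fract_div_natCast_eq_div_natCast_mod]
  have : 1 ≤ m % n := Nat.one_le_iff_ne_zero.2 (mt Nat.dvd_of_mod_eq_zero h)
  gcongr
  exact_mod_cast this

theorem fract_mul_div_eq_sub_of_det {α₀ α₁ β₀ β₁ j : ℕ} {σ : ℤ} (hσ : σ = 1 ∨ σ = -1)
    (hdet : (α₁ : ℤ) * β₀ - (β₁ : ℤ) * α₀ = σ) (hj₁ : j < β₁) (hj₀ : j < β₀) :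
    fract ((α₀ * j : k) / β₀) = fract ((α₁ * j : k) / β₁) - σ * j / (β₀ * β₁) := by
  have hβ₀ : (0 : k) < β₀ := by exact_mod_cast (j.zero_le.trans_lt hj₀)
  have hβ₁ : (0 : k) < β₁ := by exact_mod_cast (j.zero_le.trans_lt hj₁)
  have hdet' : (α₁ : k) * β₀ - β₁ * α₀ = σ := by exact_mod_cast hdet
  have hsplit : (α₀ * j : k) / β₀ = (α₁ * j : k) / β₁ - σ * j / (β₀ * β₁) := by
    field_simp
    linear_combination (-j : k) * hdet'
  have hsmall : (j : k) / (β₀ * β₁) < 1 / β₁ := by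
    rw [div_lt_div_iff₀ (by positivity) hβ₁, one_mul]
    exact mul_lt_mul_of_pos_right (by exact_mod_cast hj₀) hβ₁
  have hupper : fract ((α₁ * j : k) / β₁) ≤ 1 - 1 / β₁ := by
    simpa using fract_natCast_div_le_one_sub (k := k) (α₁ * j) (j.zero_le.trans_lt hj₁)
  have hlower (hj : 0 < j) : 1 / (β₁ : k) ≤ fract ((α₁ * j : k) / β₁) := by
    have hcop : β₁.Coprime α₁ := (coprime_of_mul_sub_mul_eq hσ hdet).symm
    have hndvd : ¬β₁ ∣ α₁ * j := fun hd => (Nat.le_of_dvd hj (hcop.dvd_of_dvd_mul_left hd)).not_gt hj₁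
    simpa using one_div_le_fract_natCast_div (k := k) hndvd
  have hε : 0 ≤ (j : k) / (β₀ * β₁) := by positivity
  have hfract := fract_nonneg ((α₁ * j : k) / β₁)
  rw [hsplit]
  rcases hσ with rfl | rfl
  · rw [Int.cast_one, one_mul]
    apply fract_sub_eq_of_le_fract
    · rcases j.eq_zero_or_pos with rfl | hj
      · simp
      · exact hsmall.le.trans (hlower hj)
    · linarith [fract_lt_one ((α₁ * j : k) / β₁)]
  · rw [Int.cast_neg, Int.cast_one, neg_one_mul, neg_div]
    apply fract_sub_eq_of_le_fract <;> linarith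

end FloorRing

theorem stmt_6_general (α₀ α₁ β₀ β₁ : ℕ)
    (hβ : β₁ < β₀) (σ : ℤ) (hσ : σ = 1 ∨ σ = -1)
    (h : (α₁ : ℤ) * β₀ - (β₁ : ℤ) * α₀ = σ)
    (u : ℕ) (hu : u < β₁) :
    ∑ j ∈ Finset.range (u + 1), Int.fract ((α₀ * j : ℚ) / β₀) =
      (∑ j ∈ Finset.range (u + 1), Int.fract ((α₁ * j : ℚ) / β₁)) -
        (σ : ℚ) * ((u + 1) * u) / (2 * β₀ * β₁) := by
  have hterm : ∀ j ∈ Finset.range (u + 1), fract ((α₀ * j : ℚ) / β₀) =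
      fract ((α₁ * j : ℚ) / β₁) - σ * j / (β₀ * β₁) := fun j hj =>
    fract_mul_div_eq_sub_of_det hσ h (by simp at hj; omega) (by simp at hj; omega)
  rw [sum_congr rfl hterm, sum_sub_distrib, ← sum_div, ← mul_sum]
  rw [← sum_range_succ_natCast_mul_two (k := ℚ) u]
  ring

theorem stmt_6 (α₀ α₁ β₀ β₁ : ℕ) (hα₁ : 1 ≤ α₁) (hβ₁ : 1 ≤ β₁)
    (hα : α₁ < α₀) (hβ : β₁ < β₀) (σ : ℤ) (hσ : σ = 1 ∨ σ = -1)
    (h : (α₁ : ℤ) * β₀ - (β₁ : ℤ) * α₀ = σ)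
    (u : ℕ) (hu : u < β₁) :
    ∑ j ∈ Finset.range (u + 1), Int.fract ((α₀ * j : ℚ) / β₀) =
      (∑ j ∈ Finset.range (u + 1), Int.fract ((α₁ * j : ℚ) / β₁)) -
        (σ : ℚ) * ((u + 1) * u) / (2 * β₀ * β₁) :=
  stmt_6_general α₀ α₁ β₀ β₁ hβ σ hσ h u hu
end

section
/- Suppose α₀ > α₁ ≥ 1, β₀ > β₁ ≥ 1 are integers with α₁β₀ − β₁α₀ = σ where σ = ±1. Then the sum over j from 0 to β₁ of {α₀ j / β₀} equals (1 − σ + (β₁ + σ)(β₀ − σ)) / (2β₀). -/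
/-!
Write `r j = α₀ j mod β₀`, so that the sum is `(∑ r j) / β₀`. Since `α₁β₀ − β₁α₀ = σ`, the
number `α₀` is invertible modulo `β₀` and `α₀β₁ ≡ −σ (mod β₀)`. Hence for `0 < j < β₁` the residues
`r j` and `r (β₁ − j)` lie in `(0, β₀)`, and their sum, being `≡ −σ`, equals `β₀ − σ`. Pairing
`j` with `β₁ − j` sums the inner terms, and the endpoints contribute `r 0 = 0` and `r β₁ = −σ mod β₀`.
-/

open Finset

namespace Int

theorem mul_emod_pos_of_isCoprime {a n j : ℤ} (hna : IsCoprime n a) (hj : 0 < j) (hjn : j < n) :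
    0 < a * j % n := by
  refine (emod_nonneg _ (by omega)).lt_of_ne' fun h0 => ?_
  have hnj : n ∣ j := hna.dvd_of_dvd_mul_left (dvd_of_emod_eq_zero h0)
  exact absurd (le_of_dvd hj hnj) (not_le.2 hjn)

theorem emod_add_emod_eq_sub {x y n σ : ℤ} (hn : 0 < n) (hx : 0 < x % n) (hy : 0 < y % n)
    (hσ : |σ| ≤ 1) (hxy : x + y ≡ -σ [ZMOD n]) : x % n + y % n = n - σ := by
  obtain ⟨k, hk⟩ : n ∣ x % n + y % n + σ := by
    have := ((mod_modEq x n).add (mod_modEq y n)).trans hxy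
    simpa only [sub_neg_eq_add] using this.symm.dvd
  have hxn := emod_lt_of_pos x hn
  have hyn := emod_lt_of_pos y hn
  have hσ' := abs_le.1 hσ
  have hk_pos : 0 < k := pos_of_mul_pos_right (by omega : 0 < n * k) hn.le
  have hk_lt : k < 2 := lt_of_mul_lt_mul_left (by omega : n * k < n * 2) hn.le
  obtain rfl : k = 1 := by omega
  omega

theorem two_mul_sum_Ico_emod {a n σ : ℤ} {m : ℕ} (hna : IsCoprime n a) (hmn : (m : ℤ) < n)
    (hσ : |σ| ≤ 1) (ham : a * m ≡ -σ [ZMOD n]) :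
    2 * ∑ j ∈ Ico 1 m, a * j % n = (m - 1 : ℕ) * (n - σ) := by
  have hpair : ∀ j ∈ Ico 1 m, a * j % n + a * (m - j : ℕ) % n = n - σ := by
    intro j hj
    have hj := mem_Ico.1 hj
    refine emod_add_emod_eq_sub (by omega) (mul_emod_pos_of_isCoprime hna (by omega) (by omega))
      (mul_emod_pos_of_isCoprime hna (by omega) (by omega)) hσ ?_
    rwa [← mul_add, ← Nat.cast_add, Nat.add_sub_cancel' hj.2.le]
  have hreflect : ∑ j ∈ Ico 1 m, a * (m - j : ℕ) % n = ∑ j ∈ Ico 1 m, a * j % n := by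
    rw [sum_Ico_reflect (fun j : ℕ => a * j % n) 1 (by omega : m ≤ m + 1)]
    congr 1
    ext j
    simp only [mem_Ico]
    omega
  rw [two_mul]
  nth_rw 2 [← hreflect]
  rw [← sum_add_distrib, sum_congr rfl hpair, sum_const, Nat.card_Ico, nsmul_eq_mul]

theorem two_mul_neg_emod_of_eq_one_or_eq_neg_one {n σ : ℤ} (hn : 1 < n) (hσ : σ = 1 ∨ σ = -1) :
    2 * (-σ % n) = 1 - σ + (1 + σ) * (n - σ) := by
  rcases hσ with rfl | rfl
  · rw [show -1 = n - 1 + n * (-1) by ring, add_mul_emod_self_left,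
      emod_eq_of_lt (by omega) (by omega)]
    ring
  · rw [neg_neg, emod_eq_of_lt (by omega) hn]
    ring

theorem two_mul_sum_range_emod {a n σ : ℤ} {m : ℕ} (hna : IsCoprime n a) (hm : 1 ≤ m)
    (hmn : (m : ℤ) < n) (hσ : σ = 1 ∨ σ = -1) (ham : a * m ≡ -σ [ZMOD n]) :
    2 * ∑ j ∈ Finset.range (m + 1), a * j % n = 1 - σ + (m + σ) * (n - σ) := by
  have hinner := two_mul_sum_Ico_emod hna hmn (abs_le.2 (by omega)) ham
  rw [Nat.cast_sub hm, Nat.cast_one] at hinner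
  have hlast := two_mul_neg_emod_of_eq_one_or_eq_neg_one (n := n) (by omega) hσ
  rw [← ham] at hlast
  rw [sum_range_succ, range_eq_Ico, sum_eq_sum_Ico_succ_bot (by omega), Nat.cast_zero, mul_zero,
    zero_emod, zero_add]
  linear_combination hinner + hlast

end Int

theorem sum_fract_mul_div {k : Type*} [Field k] [LinearOrder k] [IsOrderedRing k] [FloorRing k]
    (s : Finset ℕ) (a n : ℕ) :
    ∑ j ∈ s, Int.fract ((a * j : k) / n) = ((∑ j ∈ s, (a * j : ℤ) % n : ℤ) : k) / n := by
  rw [Int.cast_sum, sum_div]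
  refine sum_congr rfl fun j _ => ?_
  have := Int.fract_div_intCast_eq_div_intCast_mod (k := k) (m := a * j) (n := n)
  push_cast at this
  exact this

theorem stmt_7_general (α₀ α₁ β₀ β₁ : ℕ) (hβ₁ : 1 ≤ β₁)
    (hβ : β₁ < β₀) (σ : ℤ) (hσ : σ = 1 ∨ σ = -1)
    (h : (α₁ : ℤ) * β₀ - (β₁ : ℤ) * α₀ = σ) :
    ∑ j ∈ Finset.range (β₁ + 1), Int.fract ((α₀ * j : ℚ) / β₀) =
      (1 - (σ : ℚ) + ((β₁ : ℚ) + σ) * ((β₀ : ℚ) - σ)) / (2 * β₀) := by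
  have hσσ : σ * σ = 1 := by rcases hσ with rfl | rfl <;> norm_num
  have hcop : IsCoprime (β₀ : ℤ) α₀ := ⟨σ * α₁, -σ * β₁, by linear_combination σ * h + hσσ⟩
  have hcong : (α₀ : ℤ) * β₁ ≡ -σ [ZMOD β₀] := Int.modEq_iff_dvd.2 ⟨-α₁, by linear_combination h⟩
  have hsum := congrArg (Int.cast : ℤ → ℚ)
    (Int.two_mul_sum_range_emod hcop hβ₁ (by exact_mod_cast hβ) hσ hcong)
  have hβ₀ : (β₀ : ℚ) ≠ 0 := by exact_mod_cast (show β₀ ≠ 0 by omega)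
  rw [sum_fract_mul_div, div_eq_div_iff hβ₀ (by positivity)]
  push_cast at hsum ⊢
  linear_combination (β₀ : ℚ) * hsum

theorem stmt_7 (α₀ α₁ β₀ β₁ : ℕ) (hα₁ : 1 ≤ α₁) (hβ₁ : 1 ≤ β₁)
    (hα : α₁ < α₀) (hβ : β₁ < β₀) (σ : ℤ) (hσ : σ = 1 ∨ σ = -1)
    (h : (α₁ : ℤ) * β₀ - (β₁ : ℤ) * α₀ = σ) :
    ∑ j ∈ Finset.range (β₁ + 1), Int.fract ((α₀ * j : ℚ) / β₀) =
      (1 - (σ : ℚ) + ((β₁ : ℚ) + σ) * ((β₀ : ℚ) - σ)) / (2 * β₀) :=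
  stmt_7_general α₀ α₁ β₀ β₁ hβ₁ hβ σ hσ h
end

section
/- Suppose α₀ > α₁ ≥ 1, β₀ > β₁ ≥ 1 are integers with α₁β₀ − β₁α₀ = σ = ±1. For any integer j with 1 ≤ j < β₀, one has {α₀(j+β₁)/β₀} = {α₀ j/β₀} − σ/β₀ − Δ'(σ, j), where Δ'(σ, j) = 1 if j = β₀ − β₁ and σ = −1, and Δ'(σ, j) = 0 otherwise. -/
/-!
Since `α₀β₁ = α₁β₀ - σ`, the number `α₀(j+β₁)/β₀` differs from `(α₀j - σ)/β₀` by the integer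
`α₁`, so only the residue of `α₀j - σ` modulo `β₀` matters. As `β₀` is coprime to `α₀` and
`0 < j < β₀`, the residue `r` of `α₀j` is nonzero, so subtracting `σ = 1` cannot wrap around; adding
`1` wraps around exactly when `r = β₀ - 1`, i.e. when `β₀ ∣ α₀(j + β₁)`, i.e. when `j + β₁ = β₀`.
-/

theorem Int.emod_sub_sign {a b σ : ℤ} (hb : 0 < b) (hσ : σ = 1 ∨ σ = -1) (ha : ¬ b ∣ a) :
    (a - σ) % b = a % b - σ - if σ = -1 ∧ b ∣ a - σ then b else 0 := by
  have hr₀ : 0 < a % b := lt_of_le_of_ne (Int.emod_nonneg a hb.ne')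
    (Ne.symm fun h => ha (Int.dvd_of_emod_eq_zero h))
  have hr₁ : a % b < b := Int.emod_lt_of_pos a hb
  have hshift : (a - σ) % b = (a % b - σ) % b :=
    (Int.emod_sub_cancel_right σ).mpr (Int.emod_emod a b).symm
  simp only [Int.dvd_iff_emod_eq_zero, hshift]
  rcases hσ with rfl | rfl
  · rw [Int.emod_eq_of_lt (by omega) (by omega), if_neg (by omega)]
    ring
  · rcases (show a % b - -1 = b ∨ a % b - -1 < b by omega) with hr | hr
    · rw [hr, Int.emod_self, if_pos ⟨rfl, rfl⟩]
      ring
    · rw [Int.emod_eq_of_lt (by omega) hr, if_neg (by omega)]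
      ring

theorem Int.fract_intCast_sub_sign_div {k : Type*} [Field k] [LinearOrder k]
    [IsStrictOrderedRing k] [FloorRing k] {a σ : ℤ} {n : ℕ} (hn : 0 < n)
    (hσ : σ = 1 ∨ σ = -1) (ha : ¬ (n : ℤ) ∣ a) :
    Int.fract (((a - σ : ℤ) : k) / n) =
      Int.fract ((a : k) / n) - σ / n - if σ = -1 ∧ (n : ℤ) ∣ a - σ then 1 else 0 := by
  rw [Int.fract_div_intCast_eq_div_intCast_mod, Int.fract_div_intCast_eq_div_intCast_mod,
    Int.emod_sub_sign (by exact_mod_cast hn) hσ ha]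
  have : (n : k) ≠ 0 := by positivity
  split_ifs
  · push_cast; field_simp
  · push_cast; ring

theorem IsCoprime.not_dvd_mul_of_pos_of_lt {a b j : ℤ} (hcop : IsCoprime b a) (hj : 0 < j)
    (hjb : j < b) : ¬ b ∣ a * j := fun hd => by
  have := Int.le_of_dvd hj (hcop.dvd_of_dvd_mul_left hd)
  omega

theorem dvd_mul_sub_iff_add_eq {α₀ α₁ β₀ β₁ j : ℕ} {σ : ℤ} (hcop : IsCoprime (β₀ : ℤ) α₀)
    (h : (α₁ : ℤ) * β₀ - (β₁ : ℤ) * α₀ = σ) (hj : 0 < j) (hjβ : j < β₀) (hβ : β₁ < β₀) :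
    (β₀ : ℤ) ∣ α₀ * j - σ ↔ j + β₁ = β₀ := by
  rw [show (α₀ * j - σ : ℤ) = α₀ * ((j + β₁ : ℕ) : ℤ) - β₀ * α₁ by push_cast; linear_combination h,
    dvd_sub_left (dvd_mul_right _ _)]
  constructor
  · intro hd
    exact Nat.eq_of_dvd_of_lt_two_mul (by omega)
      (Int.natCast_dvd_natCast.mp (hcop.dvd_of_dvd_mul_left hd)) (by omega)
  · intro hj
    exact dvd_mul_of_dvd_right ⟨1, by rw [hj]; ring⟩ _

theorem stmt_8_general (α₀ α₁ β₀ β₁ : ℕ)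
    (hβ : β₁ < β₀) (σ : ℤ) (hσ : σ = 1 ∨ σ = -1)
    (h : (α₁ : ℤ) * β₀ - (β₁ : ℤ) * α₀ = σ)
    (j : ℕ) (hj1 : 1 ≤ j) (hj2 : j < β₀) :
    Int.fract ((α₀ * (j + β₁) : ℚ) / β₀) =
      Int.fract ((α₀ * j : ℚ) / β₀) - (σ : ℚ) / β₀ -
        (if j = β₀ - β₁ ∧ σ = -1 then 1 else 0) := by
  have hσsq : σ * σ = 1 := by rcases hσ with rfl | rfl <;> norm_num
  have hcop : IsCoprime (β₀ : ℤ) α₀ := ⟨σ * α₁, -(σ * β₁), by linear_combination σ * h + hσsq⟩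
  have hshift : (α₀ * (j + β₁) : ℚ) / β₀ = ((α₀ * j - σ : ℤ) : ℚ) / β₀ + α₁ := by
    have hQ : (α₁ : ℚ) * β₀ - (β₁ : ℚ) * α₀ = σ := by exact_mod_cast h
    have hβ₀ : (β₀ : ℚ) ≠ 0 := Nat.cast_ne_zero.mpr (by omega)
    field_simp
    push_cast
    linear_combination -hQ
  have hndvd : ¬ (β₀ : ℤ) ∣ α₀ * j := hcop.not_dvd_mul_of_pos_of_lt (by omega) (by omega)
  have hwrap : (β₀ : ℤ) ∣ α₀ * j - σ ↔ j = β₀ - β₁ :=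
    (dvd_mul_sub_iff_add_eq hcop h (by omega) hj2 hβ).trans (by omega)
  rw [hshift, Int.fract_add_natCast, Int.fract_intCast_sub_sign_div (by omega) hσ hndvd]
  simp only [hwrap, and_comm]
  push_cast
  rfl

theorem stmt_8 (α₀ α₁ β₀ β₁ : ℕ) (hα₁ : 1 ≤ α₁) (hβ₁ : 1 ≤ β₁)
    (hα : α₁ < α₀) (hβ : β₁ < β₀) (σ : ℤ) (hσ : σ = 1 ∨ σ = -1)
    (h : (α₁ : ℤ) * β₀ - (β₁ : ℤ) * α₀ = σ)
    (j : ℕ) (hj1 : 1 ≤ j) (hj2 : j < β₀) :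
    Int.fract ((α₀ * (j + β₁) : ℚ) / β₀) =
      Int.fract ((α₀ * j : ℚ) / β₀) - (σ : ℚ) / β₀ -
        (if j = β₀ - β₁ ∧ σ = -1 then 1 else 0) :=
  stmt_8_general α₀ α₁ β₀ β₁ hβ σ hσ h j hj1 hj2
end

section
/- Let β, β′, t, u be integers with 0 ≤ u < β < β′ and 0 ≤ t ≤ ⌊(β′−1−u)/β⌋, and define ε(1, t, u, β′, β) = (u+1)(u + β′ − β)/(2β′β) + t(β(t−1) + 2u + 1 − β′)/(2β′). Then (−(β′+β−1)² + 4(β′−β))/(8β′β) ≤ ε(1, t, u, β′, β) ≤ (β′−1)/(2β′). -/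
theorem stmt_13 (β β' t u : ℤ) (hu : 0 ≤ u) (huβ : u < β) (hββ' : β < β')
    (ht0 : 0 ≤ t) (ht : t ≤ (β' - 1 - u) / β) :
    (-(β' + β - 1) ^ 2 + 4 * (β' - β)) / (8 * (β' : ℚ) * β) ≤
        ((u : ℚ) + 1) * (u + β' - β) / (2 * β' * β) +
          (t : ℚ) * (β * (t - 1) + 2 * u + 1 - β') / (2 * β') ∧
      ((u : ℚ) + 1) * (u + β' - β) / (2 * β' * β) +
          (t : ℚ) * (β * (t - 1) + 2 * u + 1 - β') / (2 * β')
        ≤ ((β' : ℚ) - 1) / (2 * β') := by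
  have hβ : 0 < β := lt_of_le_of_lt hu huβ
  have htβ : t * β ≤ β' - 1 - u := (Int.le_ediv_iff_mul_le hβ).mp ht
  have hb : (0:ℚ) < (β:ℚ) := by exact_mod_cast hβ
  have hb' : (0:ℚ) < (β':ℚ) := by exact_mod_cast hβ.trans hββ'
  have hqu : (0:ℚ) ≤ (u:ℚ) := by exact_mod_cast hu
  have hqt : (0:ℚ) ≤ (t:ℚ) := by exact_mod_cast ht0
  have hquβ : (u:ℚ) + 1 ≤ (β:ℚ) := by exact_mod_cast huβ
  have hqββ' : (β:ℚ) + 1 ≤ (β':ℚ) := by exact_mod_cast hββ'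
  have hx : (t:ℚ) * β + u ≤ (β':ℚ) - 1 := by
    have : t * β + u ≤ β' - 1 := by linarith
    exact_mod_cast this
  have hx0 : (0:ℚ) ≤ (t:ℚ) * β + u := by positivity
  constructor
  · rw [div_add_div _ _ (by positivity) (by positivity), div_le_div_iff₀ (by positivity) (by positivity)]
    nlinarith [sq_nonneg (2 * ((t:ℚ) * β + u) - (β' + β - 1)), mul_nonneg hqu hb'.le,
      mul_pos hb hb', mul_pos (mul_pos hb hb') hb',
      mul_nonneg (mul_nonneg hqu hb'.le) (mul_pos hb hb').le,
      mul_nonneg (sq_nonneg (2 * ((t:ℚ) * β + u) - (β' + β - 1))) (mul_pos hb hb').le]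
  · rw [div_add_div _ _ (by positivity) (by positivity), div_le_div_iff₀ (by positivity) (by positivity)]
    nlinarith [mul_nonneg (mul_nonneg (by linarith : (0:ℚ) ≤ (β':ℚ) - ((t:ℚ)*β + u)) (mul_nonneg hqt hb.le)) hb'.le,
      mul_nonneg (mul_nonneg hb'.le (by linarith : (0:ℚ) ≤ (β:ℚ) - 1 - u)) hb'.le,
      mul_nonneg (mul_nonneg hx0 (by linarith : (0:ℚ) ≤ (β:ℚ) - 1 - u)) hb'.le,
      mul_pos hb hb', mul_pos hb' hb']
end

section
/- Fix a positive integer k and let P′ be the lattice triangle in ℝ² with vertices (0,0), (−(2k+3), 0), and (−3(2k+1), 4(2k+1)). Then the number of lattice points of ℤ² in P′ equals 8k² + 18k + 11, which equals C(4(k+1)+1, 2) + 1. -/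
/-!
The triangle is cut out by `y ≥ 0`, `4x + 3y ≤ 0` and `2cx + (c - 1)y + 2c(c + 2) ≥ 0`,
where `c = 2k + 1`. In the unimodular coordinates `(t, x) = (2x + y, x)` the last constraint
becomes `x ≥ -kt - c(c + 2)`, so every line `t = const` meets the triangle in an interval of
`x`'s, and the lattice points are counted line by line over `-2c - 4 ≤ t ≤ 0`. For `t ≥ -2c`
the interval is `⌈3t/2⌉ ≤ x ≤ ⌊t/2⌋`, whose lengths add up to `2c² + 2c + 1`; the four lines
`t < -2c` contribute `1 + (k + 1) + (2k + 2) + (3k + 2)`.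
-/

open Finset

theorem convexHull_triangle_eq {c : ℝ} (hc : 0 < c) :
    convexHull ℝ {(0, 0), (-(c + 2), 0), (-(3 * c), 4 * c)} =
      {p : ℝ × ℝ | 0 ≤ p.2 ∧ 4 * p.1 + 3 * p.2 ≤ 0 ∧
        0 ≤ 2 * c * p.1 + (c - 1) * p.2 + 2 * c * (c + 2)} := by
  apply subset_antisymm
  · refine convexHull_min ?_ ?_
    · rintro p (rfl | rfl | rfl) <;> refine ⟨?_, ?_, ?_⟩ <;> dsimp only <;> nlinarith
    · have lin (a b : ℝ) : IsLinearMap ℝ fun p : ℝ × ℝ => a * p.1 + b * p.2 :=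
        ⟨fun p q => by simp only [Prod.fst_add, Prod.snd_add]; ring,
         fun r p => by simp only [Prod.smul_fst, Prod.smul_snd, smul_eq_mul]; ring⟩
      have := (convex_halfSpace_ge (lin 0 1) 0).inter <| (convex_halfSpace_le (lin 4 3) 0).inter <|
        convex_halfSpace_ge (lin (2 * c) (c - 1)) (-(2 * c * (c + 2)))
      convert this using 1
      ext p
      simp only [Set.mem_ofPred_eq, Set.mem_inter_iff]
      constructor <;> rintro ⟨h₁, h₂, h₃⟩ <;> refine ⟨?_, ?_, ?_⟩ <;> linarith
  · rintro ⟨x, y⟩ ⟨hy, hxy, h⟩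
    refine mem_convexHull_of_exists_fintype
      ![(2 * c * x + (c - 1) * y + 2 * c * (c + 2)) / (2 * c * (c + 2)),
        -(4 * x + 3 * y) / (4 * (c + 2)), y / (4 * c)]
      ![(0, 0), (-(c + 2), 0), (-(3 * c), 4 * c)] ?_ ?_ ?_ ?_
    · intro i; fin_cases i <;> dsimp <;> apply div_nonneg <;> first | positivity | linarith
    · simp only [Fin.sum_univ_three, Matrix.cons_val]; field_simp; ring
    · intro i; fin_cases i <;> simp
    · simp only [Fin.sum_univ_three, Matrix.cons_val, Prod.smul_mk, smul_eq_mul, Prod.mk_add_mk,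
        Prod.mk.injEq]
      constructor <;> field_simp <;> ring

theorem ncard_le_and_le_eq_sum {α : Type*} (s : Finset α) (lo hi : α → ℤ)
    (hs : ∀ t, lo t ≤ hi t → t ∈ s) :
    {p : α × ℤ | lo p.1 ≤ p.2 ∧ p.2 ≤ hi p.1}.ncard = ∑ t ∈ s, (hi t + 1 - lo t).toNat := by
  have : {p : α × ℤ | lo p.1 ≤ p.2 ∧ p.2 ≤ hi p.1} =
      Equiv.sigmaEquivProd α ℤ '' ↑(s.sigma fun t => Icc (lo t) (hi t)) := by
    ext ⟨t, x⟩
    simp only [Equiv.image_eq_preimage_symm, Set.mem_preimage, Equiv.sigmaEquivProd_symm_apply,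
      mem_coe, mem_sigma, mem_Icc]
    exact ⟨fun h => ⟨hs t (h.1.trans h.2), h⟩, And.right⟩
  rw [this, Set.ncard_image_of_injective _ (Equiv.injective _), Set.ncard_coe_finset, card_sigma]
  simp_rw [Int.card_Icc]

theorem sum_Icc_sub_one_left {M : Type*} [AddCommMonoid M] (f : ℤ → M) {a b : ℤ}
    (h : a - 1 ≤ b) : ∑ t ∈ Icc (a - 1) b, f t = f (a - 1) + ∑ t ∈ Icc a b, f t := by
  rw [← insert_Icc_left_eq_Icc_sub_one h, sum_insert (by simp)]

-- `(3 * t + 1) / 2 = ⌈3t/2⌉`, so the summand counts the integers in `[3t/2, t/2]`.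
theorem sum_Icc_neg_two_mul_toNat (M : ℕ) :
    ∑ t ∈ Icc (-(2 * M : ℤ)) 0, (t / 2 + 1 - (3 * t + 1) / 2).toNat = 2 * M ^ 2 + 2 * M + 1 := by
  induction M with
  | zero => decide
  | succ M ih =>
    rw [show -(2 * (M + 1 : ℕ) : ℤ) = -(2 * M) - 1 - 1 by push_cast; ring,
      sum_Icc_sub_one_left _ (by omega), sum_Icc_sub_one_left _ (by omega), ih]
    have h₁ : ((-(2 * M : ℤ) - 1 - 1) / 2 + 1 - (3 * (-(2 * M : ℤ) - 1 - 1) + 1) / 2).toNat =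
        2 * M + 3 := by omega
    have h₂ : ((-(2 * M : ℤ) - 1) / 2 + 1 - (3 * (-(2 * M : ℤ) - 1) + 1) / 2).toNat =
        2 * M + 1 := by omega
    rw [h₁, h₂]
    ring

theorem ncard_lattice_triangle {m : ℕ} (hm : Odd m) :
    {v : ℤ × ℤ | 0 ≤ v.2 ∧ 4 * v.1 + 3 * v.2 ≤ 0 ∧
      0 ≤ 2 * m * v.1 + (m - 1) * v.2 + 2 * m * (m + 2)}.ncard = 2 * m ^ 2 + 5 * m + 4 := by
  obtain ⟨K, rfl⟩ := hm
  set m : ℤ := ((2 * K + 1 : ℕ) : ℤ) with hmK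
  push_cast at hmK
  set lo : ℤ → ℤ := fun t => max ((3 * t + 1) / 2) (-(K * t) - m * (m + 2))
  have lo_of_ge {t : ℤ} (ht : -(2 * m) ≤ t) : lo t = (3 * t + 1) / 2 := by
    have : 2 * (-(K * t) - m * (m + 2)) ≤ 3 * t := by
      nlinarith [mul_nonneg (by omega : 0 ≤ m + 2) (by omega : 0 ≤ t + 2 * m)]
    exact max_eq_left (by omega)
  have lo_of_le {t : ℤ} (ht : t ≤ -(2 * m)) : lo t = -(K * t) - m * (m + 2) := by
    have : 3 * t ≤ 2 * (-(K * t) - m * (m + 2)) := by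
      nlinarith [mul_nonneg (by omega : 0 ≤ m + 2) (by omega : 0 ≤ -(t + 2 * m))]
    exact max_eq_right (by omega)
  have shear : Function.Bijective fun v : ℤ × ℤ => (2 * v.1 + v.2, v.1) := by
    refine ⟨fun v w h => ?_, fun p => ⟨(p.2, p.1 - 2 * p.2), by simp⟩⟩
    simp only [Prod.mk.injEq] at h
    ext <;> omega
  have hset : {v : ℤ × ℤ | 0 ≤ v.2 ∧ 4 * v.1 + 3 * v.2 ≤ 0 ∧
      0 ≤ 2 * m * v.1 + (m - 1) * v.2 + 2 * m * (m + 2)} =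
      (fun v : ℤ × ℤ => (2 * v.1 + v.2, v.1)) ⁻¹' {p | lo p.1 ≤ p.2 ∧ p.2 ≤ p.1 / 2} := by
    ext ⟨x, y⟩
    have hthird : 0 ≤ 2 * m * x + (m - 1) * y + 2 * m * (m + 2) ↔
        -(K * (2 * x + y)) - m * (m + 2) ≤ x := by
      rw [hmK]; constructor <;> intro h <;> linarith
    simp only [Set.mem_preimage, Set.mem_ofPred_eq, lo, max_le_iff, hthird]
    omega
  rw [hset, Set.ncard_preimage_of_injective_subset_range shear.1 (by simp [shear.2.range_eq]),
    ncard_le_and_le_eq_sum (Icc (-(2 * m) - 1 - 1 - 1 - 1) 0) lo (· / 2)]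
  · have hlong : ∑ t ∈ Icc (-(2 * m)) 0, (t / 2 + 1 - lo t).toNat =
        2 * (2 * K + 1) ^ 2 + 2 * (2 * K + 1) + 1 := by
      rw [sum_congr rfl fun t ht => by rw [lo_of_ge (mem_Icc.1 ht).1]]
      exact sum_Icc_neg_two_mul_toNat (2 * K + 1)
    rw [sum_Icc_sub_one_left, sum_Icc_sub_one_left, sum_Icc_sub_one_left, sum_Icc_sub_one_left,
      hlong]
    · simp (disch := omega) only [lo_of_le]
      rw [hmK]
      ring_nf
      omega
    all_goals omega
  · intro t ht
    simp only [lo, max_le_iff] at ht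
    have h₁ : 2 * (-(K * t) - m * (m + 2)) ≤ t := by omega
    have h₂ : 0 ≤ m * (t + 2 * (m + 2)) := by rw [hmK] at h₁ ⊢; linarith
    have h₃ := nonneg_of_mul_nonneg_right h₂ (by omega)
    rw [mem_Icc]; omega

theorem stmt_17_general (k : ℕ) :
    Set.ncard {v : ℤ × ℤ |
        ((v.1 : ℝ), (v.2 : ℝ)) ∈
          convexHull ℝ ({(0, 0), (-((2 * k + 3 : ℕ) : ℝ), 0),
            (-(3 * (2 * k + 1 : ℕ) : ℝ), (4 * (2 * k + 1 : ℕ) : ℝ))} : Set (ℝ × ℝ))} =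
      8 * k ^ 2 + 18 * k + 11 ∧
    8 * k ^ 2 + 18 * k + 11 = Nat.choose (4 * (k + 1) + 1) 2 + 1 := by
  have hverts : -((2 * k + 3 : ℕ) : ℝ) = -(((2 * k + 1 : ℕ) : ℝ) + 2) := by push_cast; ring
  rw [hverts, convexHull_triangle_eq (by positivity)]
  constructor
  · calc _ = {v : ℤ × ℤ | 0 ≤ v.2 ∧ 4 * v.1 + 3 * v.2 ≤ 0 ∧
          0 ≤ 2 * (2 * k + 1 : ℕ) * v.1 + ((2 * k + 1 : ℕ) - 1) * v.2 +
            2 * (2 * k + 1 : ℕ) * ((2 * k + 1 : ℕ) + 2)}.ncard := by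
          congr 1; ext v; simp only [Set.mem_ofPred_eq]; norm_cast
      _ = _ := ncard_lattice_triangle (odd_two_mul_add_one k)
      _ = _ := by ring
  · rw [Nat.choose_two_right, Nat.add_sub_cancel,
      show (4 * (k + 1) + 1) * (4 * (k + 1)) = 2 * ((4 * k + 5) * (2 * k + 2)) by ring,
      Nat.mul_div_cancel_left _ two_pos]
    ring

theorem stmt_17 (k : ℕ) (hk : 0 < k) :
    Set.ncard {v : ℤ × ℤ |
        ((v.1 : ℝ), (v.2 : ℝ)) ∈
          convexHull ℝ ({(0, 0), (-((2 * k + 3 : ℕ) : ℝ), 0),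
            (-(3 * (2 * k + 1 : ℕ) : ℝ), (4 * (2 * k + 1 : ℕ) : ℝ))} : Set (ℝ × ℝ))} =
      8 * k ^ 2 + 18 * k + 11 ∧
    8 * k ^ 2 + 18 * k + 11 = Nat.choose (4 * (k + 1) + 1) 2 + 1 :=
  stmt_17_general k
end

section
/- Fix a positive integer k and let P″ be the lattice triangle in ℝ² with vertices (0,0), (−(k+1), 0), and (−3k, 4k). Then the number of lattice points of ℤ² in P″ equals C(2k+2, 2) + 1 = (2k+2)(2k+1)/2 + 1. -/
/-!
Count the lattice points of the triangle row by row: `(x, y) ∈ ℤ²` lies in it iff `0 ≤ y ≤ 4k` and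
`-(k + 1) - ⌊(2k - 1) y / 4k⌋ ≤ x ≤ ⌊-3y / 4⌋`. The resulting floor sums `∑ ⌊m y / n⌋` over
`0 ≤ y ≤ n q` (with `n` coprime to `m`) are evaluated by pairing `y` with `n q - y`: the two terms
add up to `m q - 1`, or to `m q` when `n ∣ y`.
-/

open Finset

theorem mem_convexHull_zero_pair_iff {E : Type*} [AddCommGroup E] [Module ℝ E] {a b p : E} :
    p ∈ convexHull ℝ {0, a, b} ↔
      ∃ s t : ℝ, 0 ≤ s ∧ 0 ≤ t ∧ s + t ≤ 1 ∧ s • a + t • b = p := by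
  rw [← convexJoin_singleton_segment, mem_convexJoin]
  simp only [Set.mem_singleton_iff, exists_eq_left]
  constructor
  · rintro ⟨_, ⟨u, v, hu, hv, huv, rfl⟩, α, β, hα, hβ, hαβ, rfl⟩
    refine ⟨β * u, β * v, by positivity, by positivity, by nlinarith, ?_⟩
    simp only [smul_zero, zero_add, smul_add, smul_smul]
  · rintro ⟨s, t, hs, ht, hst, rfl⟩
    rcases (add_nonneg hs ht).eq_or_lt with h0 | hpos
    · obtain ⟨rfl, rfl⟩ : s = 0 ∧ t = 0 := ⟨by linarith, by linarith⟩
      exact ⟨a, left_mem_segment ℝ a b, by simpa using left_mem_segment ℝ (0 : E) a⟩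
    · refine ⟨(s / (s + t)) • a + (t / (s + t)) • b,
        mem_segment_iff_div.2 ⟨s, t, hs, ht, hpos, rfl⟩, 1 - (s + t), s + t, by linarith, hpos.le,
        by ring, ?_⟩
      rw [smul_zero, zero_add, smul_add, smul_smul, smul_smul, mul_div_cancel₀ _ hpos.ne',
        mul_div_cancel₀ _ hpos.ne']

theorem ncard_setOf_mem_rows (s : Finset ℤ) (lo hi : ℤ → ℤ) (h : ∀ y ∈ s, lo y ≤ hi y + 1) :
    ({v : ℤ × ℤ | v.2 ∈ s ∧ lo v.2 ≤ v.1 ∧ v.1 ≤ hi v.2}.ncard : ℤ) =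
      ∑ y ∈ s, (hi y + 1 - lo y) := by
  have hrows : {v : ℤ × ℤ | v.2 ∈ s ∧ lo v.2 ≤ v.1 ∧ v.1 ≤ hi v.2} =
      ↑(s.biUnion fun y => Icc (lo y) (hi y) ×ˢ {y}) := by
    ext ⟨x, y⟩
    simp only [Set.mem_ofPred_eq, coe_biUnion, Set.mem_iUnion, coe_product, Set.mem_prod,
      coe_Icc, Set.mem_Icc, coe_singleton, Set.mem_singleton_iff, mem_coe, exists_prop]
    exact ⟨fun ⟨hy, hx⟩ => ⟨y, hy, hx, rfl⟩, fun ⟨_, hy, hx, hyi⟩ => hyi ▸ ⟨hy, hx⟩⟩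
  have hdisj : (s : Set ℤ).PairwiseDisjoint fun y => Icc (lo y) (hi y) ×ˢ {y} := by
    intro y _ y' _ hne
    simp only [Function.onFun, disjoint_product, disjoint_singleton]
    exact Or.inr hne
  rw [hrows, Set.ncard_coe_finset, card_biUnion hdisj, Nat.cast_sum]
  refine sum_congr rfl fun y hy => ?_
  rw [card_product, card_singleton, mul_one, Int.card_Icc,
    Int.toNat_of_nonneg (by linarith [h y hy])]

theorem card_filter_dvd_Icc_zero_mul {n : ℤ} (hn : 0 < n) {q : ℤ} (hq : 0 ≤ q) :
    (#{y ∈ Icc 0 (n * q) | n ∣ y} : ℤ) = q + 1 := by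
  have : {y ∈ Icc 0 (n * q) | n ∣ y} = (Icc 0 q).map ⟨(n * ·), mul_right_injective₀ hn.ne'⟩ := by
    ext y
    simp only [mem_filter, mem_Icc, mem_map, Function.Embedding.coeFn_mk]
    constructor
    · rintro ⟨⟨h0, hq⟩, c, rfl⟩
      exact ⟨c, ⟨nonneg_of_mul_nonneg_right h0 hn, le_of_mul_le_mul_left hq hn⟩, rfl⟩
    · rintro ⟨c, ⟨h0, hc⟩, rfl⟩
      exact ⟨⟨by positivity, by gcongr⟩, dvd_mul_right n c⟩
  rw [this, card_map, Int.card_Icc, Int.toNat_of_nonneg (by omega)]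
  ring

theorem two_mul_sum_Icc_mul_ediv {m n : ℤ} (hn : 0 < n) (hnm : IsCoprime n m) {q : ℤ}
    (hq : 0 ≤ q) :
    2 * ∑ y ∈ Icc 0 (n * q), m * y / n = (n * q + 1) * (m * q) - n * q + q := by
  have hreflect : ∑ y ∈ Icc 0 (n * q), m * (n * q - y) / n = ∑ y ∈ Icc 0 (n * q), m * y / n :=
    sum_nbij' (n * q - ·) (n * q - ·) (by intro y; simp only [mem_Icc]; omega)
      (by intro y; simp only [mem_Icc]; omega) (by simp) (by simp) (by simp)
  have hpair : ∀ y, m * y / n + m * (n * q - y) / n = m * q - 1 + if n ∣ y then 1 else 0 := by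
    intro y
    have : m * (n * q - y) = -(m * y) + n * (m * q) := by ring
    rw [this, Int.add_mul_ediv_left _ _ hn.ne', Int.neg_ediv, Int.sign_eq_one_of_pos hn]
    by_cases h : n ∣ y
    · simp [h, Dvd.dvd.mul_left h m]
    · have : ¬ n ∣ m * y := fun h' => h (hnm.dvd_of_dvd_mul_left h')
      simp only [h, this, if_false, add_zero]
      ring
  calc 2 * ∑ y ∈ Icc 0 (n * q), m * y / n
      = ∑ y ∈ Icc 0 (n * q), (m * y / n + m * (n * q - y) / n) := by
        rw [sum_add_distrib, hreflect]; ring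
    _ = ∑ y ∈ Icc 0 (n * q), (m * q - 1 + if n ∣ y then 1 else 0) :=
        sum_congr rfl fun y _ => hpair y
    _ = (n * q + 1) * (m * q) - n * q + q := by
        rw [sum_add_distrib, sum_const, sum_boole, card_filter_dvd_Icc_zero_mul hn hq, nsmul_eq_mul,
          Int.card_Icc, Int.toNat_of_nonneg (by nlinarith)]
        ring

theorem mem_triangle_iff {k : ℝ} (hk : 0 < k) {x y : ℝ} :
    (x, y) ∈ convexHull ℝ {0, (-(k + 1), 0), (-(3 * k), 4 * k)} ↔
      0 ≤ y ∧ 4 * x + 3 * y ≤ 0 ∧ 0 ≤ 4 * k * x + (2 * k - 1) * y + 4 * k * (k + 1) := by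
  simp only [mem_convexHull_zero_pair_iff, Prod.smul_mk, smul_eq_mul, mul_zero, Prod.mk_add_mk,
    zero_add, Prod.mk.injEq]
  constructor
  · rintro ⟨s, t, hs, ht, hst, rfl, rfl⟩
    refine ⟨by positivity, by nlinarith, ?_⟩
    have hslack : 0 ≤ 1 - s - t := by linarith
    nlinarith [mul_nonneg (mul_nonneg hk.le (by linarith : 0 ≤ k + 1)) hslack]
  · rintro ⟨hy, hxy, h⟩
    refine ⟨-(4 * x + 3 * y) / (4 * (k + 1)), y / (4 * k), by apply div_nonneg <;> linarith,
      by positivity, ?_, by field_simp; ring, by field_simp⟩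
    rw [div_add_div _ _ (by positivity) (by positivity), div_le_one (by positivity)]
    nlinarith

theorem triangle_ineqs_iff_mem_rows {k : ℤ} (hk : 0 < k) {x y : ℤ} :
    (0 ≤ y ∧ 4 * x + 3 * y ≤ 0 ∧ 0 ≤ 4 * k * x + (2 * k - 1) * y + 4 * k * (k + 1)) ↔
      y ∈ Icc 0 (4 * k) ∧ -(k + 1) - (2 * k - 1) * y / (4 * k) ≤ x ∧ x ≤ -3 * y / 4 := by
  have h4k : 0 < 4 * k := by positivity
  have hlo : -(k + 1) - (2 * k - 1) * y / (4 * k) ≤ x ↔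
      -(x + (k + 1)) * (4 * k) ≤ (2 * k - 1) * y := by
    rw [← Int.le_ediv_iff_mul_le h4k]; omega
  rw [mem_Icc, hlo, Int.le_ediv_iff_mul_le (by norm_num : (0 : ℤ) < 4)]
  constructor
  · rintro ⟨h0, h1, h2⟩
    refine ⟨⟨h0, ?_⟩, by linarith, by linarith⟩
    nlinarith
  · rintro ⟨⟨h0, h4⟩, h1, h2⟩
    exact ⟨h0, by linarith, by linarith⟩

theorem row_lower_le_upper_add_one {k y : ℤ} (hk : 0 < k) (hy : y ∈ Icc 0 (4 * k)) :
    -(k + 1) - (2 * k - 1) * y / (4 * k) ≤ -3 * y / 4 + 1 := by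
  rw [mem_Icc] at hy
  have hhi := Int.lt_ediv_add_one_mul_self (-3 * y) (by norm_num : (0 : ℤ) < 4)
  have hlo := Int.lt_ediv_add_one_mul_self ((2 * k - 1) * y) (by positivity : 0 < 4 * k)
  nlinarith

theorem sum_row_lengths {k : ℤ} (hk : 0 < k) :
    ∑ y ∈ Icc 0 (4 * k), (-3 * y / 4 + 1 - (-(k + 1) - (2 * k - 1) * y / (4 * k))) =
      2 * k ^ 2 + 3 * k + 2 := by
  have h1 := two_mul_sum_Icc_mul_ediv (m := -3) (n := 4) (by norm_num) ⟨1, 1, by norm_num⟩ hk.le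
  have h2 := two_mul_sum_Icc_mul_ediv (m := 2 * k - 1) (n := 4 * k) (by positivity)
    ⟨1 - k, 2 * k - 1, by ring⟩ zero_le_one
  rw [mul_one] at h2
  have hrow : ∀ y, -3 * y / 4 + 1 - (-(k + 1) - (2 * k - 1) * y / (4 * k)) =
      -3 * y / 4 + (2 * k - 1) * y / (4 * k) + (k + 2) := fun y => by ring
  simp only [hrow, sum_add_distrib, sum_const, Int.card_Icc, nsmul_eq_mul]
  rw [Int.toNat_of_nonneg (by omega)]
  linarith

theorem stmt_18 (k : ℕ) (hk : 0 < k) :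
    Set.ncard {v : ℤ × ℤ |
        ((v.1 : ℝ), (v.2 : ℝ)) ∈
          convexHull ℝ ({(0, 0), (-((k + 1 : ℕ) : ℝ), 0),
            (-((3 * k : ℕ) : ℝ), ((4 * k : ℕ) : ℝ))} : Set (ℝ × ℝ))} =
      (2 * k + 2) * (2 * k + 1) / 2 + 1 := by
  have hk' : (0 : ℤ) < k := by exact_mod_cast hk
  have hrows : {v : ℤ × ℤ | ((v.1 : ℝ), (v.2 : ℝ)) ∈
        convexHull ℝ ({(0, 0), (-((k + 1 : ℕ) : ℝ), 0),
          (-((3 * k : ℕ) : ℝ), ((4 * k : ℕ) : ℝ))} : Set (ℝ × ℝ))} =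
      {v : ℤ × ℤ | v.2 ∈ Icc 0 (4 * (k : ℤ)) ∧
        -((k : ℤ) + 1) - (2 * k - 1) * v.2 / (4 * k) ≤ v.1 ∧ v.1 ≤ -3 * v.2 / 4} := by
    ext ⟨x, y⟩
    simp only [Set.mem_ofPred_eq, Prod.mk_zero_zero]
    push_cast
    rw [mem_triangle_iff (by positivity), ← triangle_ineqs_iff_mem_rows hk']
    norm_cast
  have hcount : ((2 * k + 2) * (2 * k + 1) / 2 + 1 : ℕ) = 2 * k ^ 2 + 3 * k + 2 := by
    rw [show (2 * k + 2) * (2 * k + 1) = 2 * ((k + 1) * (2 * k + 1)) by ring,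
      Nat.mul_div_cancel_left _ two_pos]
    ring
  have hsum := ncard_setOf_mem_rows _ _ _ fun y hy => row_lower_le_upper_add_one hk' hy
  rw [sum_row_lengths hk', ← hrows] at hsum
  rw [hcount]
  exact_mod_cast hsum
end
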